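/- Let d ≥ 3 and 2 ≤ k ≤ d−1. Let φ be a Borel probability measure on the unit sphere S^{d−1} of ℝ^d, let L and E be k-dimensional linear subspaces of ℝ^d, and let ρ ∈ SO(d) be a rotation with L = ρE and |ρ| ≤ 1/8. Then the Prokhorov distance between π_L φ and the pushforward ρ_*(π_E φ) (both regarded as finite Borel measures supported on the sphere S_L^{k−1} := S^{d−1} ∩ L) satisfies d_P(π_L φ, ρ_*(π_E φ)) ≤ 3·|ρ|^{1/3}. -/

import Mathlib

open MeasureTheory Metric Matrix
open scoped RealInnerProductSpace Pointwise

noncomputable section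

def frobNorm {d : ℕ} (A : Matrix (Fin d) (Fin d) ℝ) : ℝ :=
  Real.sqrt (∑ i, ∑ j, (A i j) ^ 2)

def rotDist {d : ℕ} (ρ : Matrix (Fin d) (Fin d) ℝ) : ℝ := frobNorm (ρ - 1)

def IsSO {d : ℕ} (ρ : Matrix (Fin d) (Fin d) ℝ) : Prop := ρᵀ * ρ = 1 ∧ ρ.det = 1

def rotApply {d : ℕ} (ρ : Matrix (Fin d) (Fin d) ℝ) :
    EuclideanSpace ℝ (Fin d) → EuclideanSpace ℝ (Fin d) :=
  Matrix.toEuclideanLin ρ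

def projL {d : ℕ} (L : Submodule ℝ (EuclideanSpace ℝ (Fin d)))
    (x : EuclideanSpace ℝ (Fin d)) : EuclideanSpace ℝ (Fin d) :=
  (L.orthogonalProjectionOnto x : EuclideanSpace ℝ (Fin d))

def sphProj {d : ℕ} (L : Submodule ℝ (EuclideanSpace ℝ (Fin d)))
    (x : EuclideanSpace ℝ (Fin d)) : EuclideanSpace ℝ (Fin d) :=
  ‖projL L x‖⁻¹ • projL L x

def projMeasure {d : ℕ} (L : Submodule ℝ (EuclideanSpace ℝ (Fin d)))
    (μ : Measure (EuclideanSpace ℝ (Fin d))) : Measure (EuclideanSpace ℝ (Fin d)) :=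
  Measure.map (sphProj L) (μ.withDensity fun u => ENNReal.ofReal ‖projL L u‖)

def mphi {d : ℕ} (φ : Measure (EuclideanSpace ℝ (Fin d))) : ℝ :=
  sInf ((fun u => ∫ v, |⟪u, v⟫| ∂φ) '' (sphere (0 : EuclideanSpace ℝ (Fin d)) 1))

def suppFn {d : ℕ} (B : Set (EuclideanSpace ℝ (Fin d))) (v : EuclideanSpace ℝ (Fin d)) : ℝ :=
  sSup ((fun y => ⟪y, v⟫) '' B)

def devi {d : ℕ} (L : Submodule ℝ (EuclideanSpace ℝ (Fin d)))
    (K M : Set (EuclideanSpace ℝ (Fin d))) : ℝ :=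
  Real.log (sInf {r : ℝ | ∃ α β : ℝ, ∃ z ∈ L, 0 < α ∧ 0 < β ∧
    α • M ⊆ (fun y => y + z) '' K ∧ (fun y => y + z) '' K ⊆ β • M ∧ r = β / α})

def Delta {d : ℕ} (L E : Submodule ℝ (EuclideanSpace ℝ (Fin d))) : ℝ :=
  sInf (rotDist '' {ρ | IsSO ρ ∧ L.map (Matrix.toEuclideanLin ρ) = E})

/-!
For `u` on the sphere put `x = u|L` and `y = (ρu)|L`. Since `ρ` carries `E` onto `L`, it commutes
with the projections, so both measures are images of `φ`: `π_L φ` under `u ↦ x/‖x‖` with weight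
`‖x‖`, and `ρ_*(π_E φ)` under `u ↦ y/‖y‖` with weight `‖y‖`. Now `‖x - y‖ ≤ ‖u - ρu‖ ≤ |ρ| =: t`,
so the weights differ by at most `t`, and with `δ = t^{1/3}` either both weights are at most `δ`,
or the directions `x/‖x‖`, `y/‖y‖` are within `2t/δ ≤ δ` of each other (using `t ≤ 1/8`).
Pairing the two measures along `u` then gives `d_P ≤ 3δ`.
-/

open scoped ENNReal

section Normalize

variable {V : Type*} [NormedAddCommGroup V] [NormedSpace ℝ V]

theorem norm_mul_norm_smul_inv_norm_sub_le (x y : V) :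
    ‖x‖ * ‖‖x‖⁻¹ • x - ‖y‖⁻¹ • y‖ ≤ 2 * ‖x - y‖ := by
  rcases eq_or_ne x 0 with rfl | hx
  · simp
  have hrescale : ‖x‖ • (‖x‖⁻¹ • x - ‖y‖⁻¹ • y) = x - (‖x‖ / ‖y‖) • y := by
    rw [smul_sub, smul_smul, smul_smul, mul_inv_cancel₀ (norm_ne_zero_iff.mpr hx), one_smul,
      div_eq_mul_inv]
  have hradial : ‖y - (‖x‖ / ‖y‖) • y‖ ≤ ‖x - y‖ := by
    rcases eq_or_ne y 0 with rfl | hy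
    · simp
    rw [show y - (‖x‖ / ‖y‖) • y = (1 - ‖x‖ / ‖y‖) • y by rw [sub_smul, one_smul], norm_smul,
      Real.norm_eq_abs, one_sub_div (norm_ne_zero_iff.mpr hy), abs_div, abs_norm,
      div_mul_cancel₀ _ (norm_ne_zero_iff.mpr hy), abs_sub_comm]
    exact abs_norm_sub_norm_le x y
  calc ‖x‖ * ‖‖x‖⁻¹ • x - ‖y‖⁻¹ • y‖ = ‖x - (‖x‖ / ‖y‖) • y‖ := by
        rw [← hrescale, norm_smul, norm_norm]
    _ ≤ ‖x - y‖ + ‖y - (‖x‖ / ‖y‖) • y‖ := norm_sub_le_norm_sub_add_norm_sub _ _ _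
    _ ≤ 2 * ‖x - y‖ := by linarith

theorem dist_smul_inv_norm_le_or_norm_le {x y : V} {t δ : ℝ} (hδ : 0 ≤ δ)
    (hxy : ‖x - y‖ ≤ t) (htδ : 2 * t ≤ δ ^ 2) :
    dist (‖x‖⁻¹ • x) (‖y‖⁻¹ • y) ≤ δ ∨ ‖x‖ ≤ δ ∧ ‖y‖ ≤ δ := by
  have hdir : ∀ x y : V, ‖x - y‖ ≤ t → δ < ‖x‖ → dist (‖x‖⁻¹ • x) (‖y‖⁻¹ • y) ≤ δ := by
    intro x y hxy hx
    have := norm_mul_norm_smul_inv_norm_sub_le x y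
    rw [dist_eq_norm]
    nlinarith [norm_nonneg (‖x‖⁻¹ • x - ‖y‖⁻¹ • y)]
  by_cases hx : δ < ‖x‖
  · exact .inl (hdir x y hxy hx)
  by_cases hy : δ < ‖y‖
  · exact .inl (dist_comm (‖x‖⁻¹ • x) _ ▸ hdir y x (norm_sub_rev x y ▸ hxy) hy)
  exact .inr ⟨not_lt.mp hx, not_lt.mp hy⟩

end Normalize

section LevyProkhorov

variable {Ω X : Type*} [MeasurableSpace Ω] [PseudoMetricSpace X] [MeasurableSpace X]
  [OpensMeasurableSpace X] {φ : Measure Ω} [IsProbabilityMeasure φ] {f g : Ω → X}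
  {w v : Ω → ℝ≥0∞} {ε : ℝ}

theorem map_withDensity_le_map_withDensity_thickening_add (hf : Measurable f)
    (hg : Measurable g) (h : ∀ᵐ ω ∂φ, (dist (f ω) (g ω) ≤ ε ∨ w ω ≤ ENNReal.ofReal ε) ∧
      w ω ≤ v ω + ENNReal.ofReal ε)
    {ε' : ℝ} (hεε' : ε < ε') {B : Set X} (hB : MeasurableSet B) :
    (φ.withDensity w).map f B ≤ (φ.withDensity v).map g (thickening ε' B) + ENNReal.ofReal ε' := by
  have hB' : MeasurableSet (thickening ε' B) := isOpen_thickening.measurableSet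
  rw [Measure.map_apply hf hB, Measure.map_apply hg hB', withDensity_apply _ (hf hB),
    withDensity_apply _ (hg hB'), ← lintegral_indicator (hf hB), ← lintegral_indicator (hg hB')]
  calc ∫⁻ ω, (f ⁻¹' B).indicator w ω ∂φ
      ≤ ∫⁻ ω, ((g ⁻¹' thickening ε' B).indicator v ω + ENNReal.ofReal ε) ∂φ := by
        refine lintegral_mono_ae (h.mono fun ω ⟨hclose, hwv⟩ => ?_)
        by_cases hω : f ω ∈ B
        · rw [Set.indicator_of_mem (show ω ∈ f ⁻¹' B from hω)]
          rcases hclose with hd | hw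
          · have : ω ∈ g ⁻¹' thickening ε' B :=
              mem_thickening_iff.mpr ⟨f ω, hω, (dist_comm (f ω) _ ▸ hd).trans_lt hεε'⟩
            rwa [Set.indicator_of_mem this]
          · exact hw.trans le_add_self
        · simp [Set.indicator_of_notMem (show ω ∉ f ⁻¹' B from hω)]
    _ ≤ ∫⁻ ω, (g ⁻¹' thickening ε' B).indicator v ω ∂φ + ENNReal.ofReal ε' := by
        rw [lintegral_add_right _ measurable_const, lintegral_const, measure_univ, mul_one]
        gcongr

theorem levyProkhorovDist_map_withDensity_le (hf : Measurable f) (hg : Measurable g)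
    (hε : 0 ≤ ε)
    (h : ∀ᵐ ω ∂φ, (dist (f ω) (g ω) ≤ ε ∨ w ω ≤ ENNReal.ofReal ε ∧ v ω ≤ ENNReal.ofReal ε) ∧
      w ω ≤ v ω + ENNReal.ofReal ε ∧ v ω ≤ w ω + ENNReal.ofReal ε) :
    levyProkhorovDist ((φ.withDensity w).map f) ((φ.withDensity v).map g) ≤ ε := by
  refine ENNReal.toReal_le_of_le_ofReal hε (levyProkhorovEDist_le_of_forall _ _ _ ?_)
  intro ε' B hεε' hε' hB
  have hεε'_real : ε < ε'.toReal := by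
    rwa [← ENNReal.ofReal_lt_iff_lt_toReal hε hε'.ne]
  constructor
  · simpa only [ENNReal.ofReal_toReal hε'.ne] using
      map_withDensity_le_map_withDensity_thickening_add hf hg
        (h.mono fun ω ⟨hclose, hwv, _⟩ => ⟨hclose.imp_right And.left, hwv⟩) hεε'_real hB
  · simpa only [ENNReal.ofReal_toReal hε'.ne] using
      map_withDensity_le_map_withDensity_thickening_add hg hf
        (h.mono fun ω ⟨hclose, _, hvw⟩ =>
          ⟨(hclose.imp_left (dist_comm (f ω) (g ω) ▸ ·)).imp_right And.right, hvw⟩) hεε'_real hB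

end LevyProkhorov

section Rotation

variable {d : ℕ}

section Frobenius

attribute [local instance] Matrix.frobeniusNormedAddCommGroup

theorem frobNorm_eq_norm (A : Matrix (Fin d) (Fin d) ℝ) : frobNorm A = ‖A‖ := by
  rw [frobNorm, frobenius_norm_def, Real.sqrt_eq_rpow]
  simp [Real.norm_eq_abs, sq_abs]

theorem norm_toEuclideanLin_le_frobNorm (A : Matrix (Fin d) (Fin d) ℝ)
    (x : EuclideanSpace ℝ (Fin d)) : ‖toEuclideanLin A x‖ ≤ frobNorm A * ‖x‖ := by
  have hcol := frobenius_norm_mul A (replicateCol Unit (WithLp.ofLp x))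
  rwa [← replicateCol_mulVec, frobenius_norm_replicateCol, frobenius_norm_replicateCol,
    WithLp.toLp_ofLp, ← frobNorm_eq_norm] at hcol

end Frobenius

theorem toEuclideanCLM_mem_unitary {ρ : Matrix (Fin d) (Fin d) ℝ} (hρ : ρᵀ * ρ = 1) :
    toEuclideanCLM (𝕜 := ℝ) ρ ∈ unitary (EuclideanSpace ℝ (Fin d) →L[ℝ] EuclideanSpace ℝ (Fin d)) :=
  Unitary.map_mem _ (mem_unitaryGroup_iff'.mpr (by simpa [star_eq_conjTranspose] using hρ))

theorem norm_rotApply {ρ : Matrix (Fin d) (Fin d) ℝ} (hρ : ρᵀ * ρ = 1)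
    (x : EuclideanSpace ℝ (Fin d)) : ‖rotApply ρ x‖ = ‖x‖ :=
  ContinuousLinearMap.norm_map_of_mem_unitary (toEuclideanCLM_mem_unitary hρ) x

theorem projL_rotApply {ρ : Matrix (Fin d) (Fin d) ℝ} (hρ : ρᵀ * ρ = 1)
    {L E : Submodule ℝ (EuclideanSpace ℝ (Fin d))} (hLE : E.map (toEuclideanLin ρ) = L)
    (u : EuclideanSpace ℝ (Fin d)) : projL L (rotApply ρ u) = rotApply ρ (projL E u) := by
  subst hLE
  exact ((Unitary.linearIsometryEquiv ⟨_, toEuclideanCLM_mem_unitary hρ⟩).toLinearIsometry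
    |>.map_starProjection' E u).symm

theorem sphProj_rotApply {ρ : Matrix (Fin d) (Fin d) ℝ} (hρ : ρᵀ * ρ = 1)
    {L E : Submodule ℝ (EuclideanSpace ℝ (Fin d))} (hLE : E.map (toEuclideanLin ρ) = L)
    (u : EuclideanSpace ℝ (Fin d)) : sphProj L (rotApply ρ u) = rotApply ρ (sphProj E u) := by
  rw [sphProj, sphProj, projL_rotApply hρ hLE, norm_rotApply hρ, rotApply, map_smul]

theorem continuous_projL (L : Submodule ℝ (EuclideanSpace ℝ (Fin d))) : Continuous (projL L) :=
  L.starProjection.continuous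

theorem measurable_sphProj (L : Submodule ℝ (EuclideanSpace ℝ (Fin d))) :
    Measurable (sphProj L) :=
  (continuous_projL L).norm.measurable.inv.smul (continuous_projL L).measurable

theorem measurable_rotApply (ρ : Matrix (Fin d) (Fin d) ℝ) : Measurable (rotApply ρ) :=
  (toEuclideanLin ρ).continuous_of_finiteDimensional.measurable

theorem map_rotApply_projMeasure {ρ : Matrix (Fin d) (Fin d) ℝ} (hρ : ρᵀ * ρ = 1)
    {L E : Submodule ℝ (EuclideanSpace ℝ (Fin d))} (hLE : E.map (toEuclideanLin ρ) = L)
    (φ : Measure (EuclideanSpace ℝ (Fin d))) :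
    (projMeasure E φ).map (rotApply ρ) = (φ.withDensity fun u =>
      ENNReal.ofReal ‖projL L (rotApply ρ u)‖).map (sphProj L ∘ rotApply ρ) := by
  simp_rw [projMeasure, Measure.map_map (measurable_rotApply ρ) (measurable_sphProj E),
    projL_rotApply hρ hLE, norm_rotApply hρ]
  congr 1
  funext u
  exact (sphProj_rotApply hρ hLE u).symm

theorem norm_projL_sub_projL_rotApply_le (L : Submodule ℝ (EuclideanSpace ℝ (Fin d)))
    (ρ : Matrix (Fin d) (Fin d) ℝ) (u : EuclideanSpace ℝ (Fin d)) :
    ‖projL L u - projL L (rotApply ρ u)‖ ≤ rotDist ρ * ‖u‖ :=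
  calc ‖projL L u - projL L (rotApply ρ u)‖ = ‖L.starProjection (rotApply ρ u - u)‖ := by
        rw [map_sub, norm_sub_rev]; rfl
    _ ≤ ‖rotApply ρ u - u‖ := L.norm_starProjection_apply_le _
    _ = ‖toEuclideanLin (ρ - 1) u‖ := by simp [rotApply]
    _ ≤ rotDist ρ * ‖u‖ := norm_toEuclideanLin_le_frobNorm _ _

end Rotation

theorem prokhorov_dist_projMeasure_le_general {d : ℕ}
    (φ : Measure (EuclideanSpace ℝ (Fin d))) [IsProbabilityMeasure φ]
    (hφ : φ (sphere (0 : EuclideanSpace ℝ (Fin d)) 1)ᶜ = 0)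
    (L E : Submodule ℝ (EuclideanSpace ℝ (Fin d)))
    (ρ : Matrix (Fin d) (Fin d) ℝ) (hρ : IsSO ρ)
    (hLE : E.map (Matrix.toEuclideanLin ρ) = L)
    (hsmall : rotDist ρ ≤ 1 / 8) :
    levyProkhorovDist (projMeasure L φ) (Measure.map (rotApply ρ) (projMeasure E φ))
      ≤ 3 * rotDist ρ ^ ((1 : ℝ) / 3) := by
  set t := rotDist ρ
  set δ := t ^ ((1 : ℝ) / 3)
  have ht : 0 ≤ t := Real.sqrt_nonneg _
  have hδ : 0 ≤ δ := by positivity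
  have hδt : δ ^ 3 = t := by
    rw [← Real.rpow_natCast, ← Real.rpow_mul ht]
    norm_num
  have hδ_half : δ ≤ 1 / 2 := by nlinarith [sq_nonneg δ]
  have hweight : ∀ a b : ℝ, a ≤ b + 3 * δ →
      ENNReal.ofReal a ≤ ENNReal.ofReal b + ENNReal.ofReal (3 * δ) :=
    fun a b hab => (ENNReal.ofReal_le_ofReal hab).trans ENNReal.ofReal_add_le
  rw [projMeasure, map_rotApply_projMeasure hρ.1 hLE]
  refine levyProkhorovDist_map_withDensity_le (measurable_sphProj L)
    ((measurable_sphProj L).comp (measurable_rotApply ρ)) (by positivity) ?_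
  filter_upwards [mem_ae_iff.mpr hφ] with u hu
  have hclose : ‖projL L u - projL L (rotApply ρ u)‖ ≤ t := by
    simpa [mem_sphere_zero_iff_norm.mp hu] using norm_projL_sub_projL_rotApply_le L ρ u
  have htδ : t ≤ δ := by nlinarith [mul_nonneg hδ (sub_nonneg.mpr hδ_half)]
  obtain ⟨hlo, hhi⟩ := abs_le.mp ((abs_norm_sub_norm_le _ _).trans hclose)
  refine ⟨?_, hweight _ _ (by linarith), hweight _ _ (by linarith)⟩
  rcases dist_smul_inv_norm_le_or_norm_le hδ hclose (by nlinarith) with hdist | ⟨hx, hy⟩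
  · exact .inl (hdist.trans (by linarith))
  · exact .inr ⟨ENNReal.ofReal_le_ofReal (by linarith), ENNReal.ofReal_le_ofReal (by linarith)⟩

/-- Lemma 3.1: Prokhorov distance estimate between projected directional measures. -/
theorem prokhorov_dist_projMeasure_le {d k : ℕ} (hd : 3 ≤ d) (hk2 : 2 ≤ k) (hkd : k ≤ d - 1)
    (φ : Measure (EuclideanSpace ℝ (Fin d))) [IsProbabilityMeasure φ]
    (hφ : φ (sphere (0 : EuclideanSpace ℝ (Fin d)) 1)ᶜ = 0)
    (L E : Submodule ℝ (EuclideanSpace ℝ (Fin d)))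
    (hL : Module.finrank ℝ L = k) (hE : Module.finrank ℝ E = k)
    (ρ : Matrix (Fin d) (Fin d) ℝ) (hρ : IsSO ρ)
    (hLE : E.map (Matrix.toEuclideanLin ρ) = L)
    (hsmall : rotDist ρ ≤ 1 / 8) :
    levyProkhorovDist (projMeasure L φ) (Measure.map (rotApply ρ) (projMeasure E φ))
      ≤ 3 * rotDist ρ ^ ((1 : ℝ) / 3) :=
  prokhorov_dist_projMeasure_le_general φ hφ L E ρ hρ hLE hsmall

end
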